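/- arXiv:2410.04082 — 2 statements merged into one kernel-verified Lean document; each statement's English description precedes it below -/
import Mathlib

section
/- Let θ > 0, let m ≥ 1, and let X₁, …, X_m be independent and identically distributed random variables on a probability space (Ω, P) with X_i(ω) > 0 for all ω. If X₁/θ and θ/X₁ are identically distributed, and max(X₁, …, X_m)/θ and θ/min(X₁, …, X_m) are integrable, then E[max(X₁, …, X_m)/θ] = E[θ/min(X₁, …, X_m)]; that is, the departure measure Δ*(F) = (1/m) E[max(X₁,…,X_m)/θ − θ/min(X₁,…,X_m)] equals zero. -/
open MeasureTheory ProbabilityTheory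

/-!
Put `Yᵢ = Xᵢ / θ` and `Zᵢ = θ / Xᵢ`. Log-symmetry makes each `Yᵢ` distributed like `Zᵢ`, and
both families are independent, so the vectors `(Yᵢ)` and `(Zᵢ)` have the same law and hence so do
`max Yᵢ = max Xᵢ / θ` and `max Zᵢ = θ / min Xᵢ`; the last identity holds because `x ↦ θ / x`
is antitone on the positive reals.
-/

theorem AntitoneOn.map_finset_inf' {ι α β : Type*} [LinearOrder α] [LinearOrder β]
    {g : α → β} {t : Set α} (hg : AntitoneOn g t) {s : Finset ι} (hs : s.Nonempty)
    {f : ι → α} (hf : ∀ i ∈ s, f i ∈ t) :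
    g (s.inf' hs f) = s.sup' hs (g ∘ f) := by
  obtain ⟨j, hj, hinf⟩ := Finset.exists_mem_eq_inf' hs f
  refine le_antisymm ?_ (Finset.sup'_le hs _ fun i hi => ?_)
  · rw [hinf]
    exact Finset.le_sup' (g ∘ f) hj
  · rw [hinf]
    exact hg (hf j hj) (hf i hi) (hinf ▸ Finset.inf'_le f hi)

theorem Finset.measurable_sup'_apply {ι α : Type*} [MeasurableSpace α] [SemilatticeSup α]
    [MeasurableSup₂ α] {s : Finset ι} (hs : s.Nonempty) :
    Measurable fun v : ι → α => s.sup' hs v := by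
  have h : Measurable (s.sup' hs fun i (v : ι → α) => v i) :=
    Finset.measurable_sup' hs fun i _ => measurable_pi_apply i
  rwa [funext fun v => Finset.sup'_apply hs (fun i (v : ι → α) => v i) v] at h

theorem ProbabilityTheory.IdentDistrib.finset_sup' {Ω Ω' ι α : Type*} [MeasurableSpace Ω]
    [MeasurableSpace Ω'] [Countable ι] [MeasurableSpace α] [SemilatticeSup α]
    [MeasurableSup₂ α] {μ : Measure Ω} {ν : Measure Ω'} {Y : ι → Ω → α} {Z : ι → Ω' → α}
    (h : ∀ i, IdentDistrib (Y i) (Z i) μ ν) (hY : iIndepFun Y μ) (hZ : iIndepFun Z ν)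
    {s : Finset ι} (hs : s.Nonempty) :
    IdentDistrib (fun ω => s.sup' hs (Y · ω)) (fun ω => s.sup' hs (Z · ω)) μ ν :=
  (IdentDistrib.pi h hY hZ).comp (Finset.measurable_sup'_apply hs)

theorem departure_measure_general_theta_eq_zero_general
    {Ω : Type*} [MeasurableSpace Ω] (P : Measure Ω)
    (θ : ℝ) (hθ : 0 < θ)
    (m : ℕ) (hm : 0 < m) (X : Fin m → Ω → ℝ)
    (hpos : ∀ i ω, 0 < X i ω)
    (hindep : iIndepFun X P)
    (hid : ∀ i, IdentDistrib (X i) (X ⟨0, hm⟩) P P)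
    (hls : IdentDistrib (fun ω => X ⟨0, hm⟩ ω / θ) (fun ω => θ / X ⟨0, hm⟩ ω) P P) :
    ∫ ω, Finset.univ.sup' ⟨⟨0, hm⟩, Finset.mem_univ _⟩ (fun i => X i ω) / θ ∂P
      = ∫ ω, θ / Finset.univ.inf' ⟨⟨0, hm⟩, Finset.mem_univ _⟩ (fun i => X i ω) ∂P := by
  have hne : (Finset.univ : Finset (Fin m)).Nonempty := ⟨⟨0, hm⟩, Finset.mem_univ _⟩
  show ∫ ω, Finset.univ.sup' hne (X · ω) / θ ∂P = ∫ ω, θ / Finset.univ.inf' hne (X · ω) ∂P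
  have hdiv : Measurable fun x : ℝ => x / θ := measurable_id.div_const θ
  have hinv : Measurable fun x : ℝ => θ / x := measurable_const.div measurable_id
  have hYZ : ∀ i, IdentDistrib (fun ω => X i ω / θ) (fun ω => θ / X i ω) P P := fun i =>
    (((hid i).comp hdiv).trans hls).trans ((hid i).comp hinv).symm
  have hsup := IdentDistrib.finset_sup' hYZ (hindep.comp _ fun _ => hdiv)
    (hindep.comp _ fun _ => hinv) hne
  have hanti : AntitoneOn (fun x : ℝ => θ / x) (Set.Ioi 0) := fun x hx _ _ hxy =>
    div_le_div_of_nonneg_left hθ.le hx hxy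
  simp_rw [Finset.sup'_div₀ hθ.le,
    hanti.map_finset_inf' _ fun i _ => Set.mem_Ioi.mpr (hpos i _)]
  exact hsup.integral_eq

/-- If `X₁, …, X_m` (`m ≥ 1`) are i.i.d. positive random variables and `X₁` is
log-symmetric about `θ > 0` (i.e. `X₁/θ` and `θ/X₁` are identically distributed), then
`E[max(X₁, …, X_m)/θ] = E[θ/min(X₁, …, X_m)]` (under the stated integrability
conditions); that is, the departure measure
`Δ*(F) = (1/m) E[max(X₁,…,X_m)/θ − θ/min(X₁,…,X_m)]` equals zero. -/
theorem departure_measure_general_theta_eq_zero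
    {Ω : Type*} [MeasurableSpace Ω] (P : Measure Ω) [IsProbabilityMeasure P]
    (θ : ℝ) (hθ : 0 < θ)
    (m : ℕ) (hm : 0 < m) (X : Fin m → Ω → ℝ) (hmeas : ∀ i, Measurable (X i))
    (hpos : ∀ i ω, 0 < X i ω)
    (hindep : iIndepFun X P)
    (hid : ∀ i, IdentDistrib (X i) (X ⟨0, hm⟩) P P)
    (hls : IdentDistrib (fun ω => X ⟨0, hm⟩ ω / θ) (fun ω => θ / X ⟨0, hm⟩ ω) P P)
    (hint1 : Integrable
      (fun ω => Finset.univ.sup' ⟨⟨0, hm⟩, Finset.mem_univ _⟩ (fun i => X i ω) / θ) P)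
    (hint2 : Integrable
      (fun ω => θ / Finset.univ.inf' ⟨⟨0, hm⟩, Finset.mem_univ _⟩ (fun i => X i ω)) P) :
    ∫ ω, Finset.univ.sup' ⟨⟨0, hm⟩, Finset.mem_univ _⟩ (fun i => X i ω) / θ ∂P
      = ∫ ω, θ / Finset.univ.inf' ⟨⟨0, hm⟩, Finset.mem_univ _⟩ (fun i => X i ω) ∂P :=
  departure_measure_general_theta_eq_zero_general P θ hθ m hm X hpos hindep hid hls
end

section
/- Let n and β be natural numbers with β + 1 ≤ n and let 0 < x₁ ≤ x₂ ≤ ⋯ ≤ x_n be positive real numbers arranged in nondecreasing order. Then the U-statistic value C(n, β+1)^{-1} (β+1)^{-1} ∑_S (max_{i∈S} x_i − 1/(min_{i∈S} x_i)), where the sum ranges over all subsets S of {1, …, n} of cardinality β + 1, equals C(n, β+1)^{-1} (β+1)^{-1} ∑_{i=1}^{n} (C(i−1, β) x_i − C(n−i, β) / x_i). -/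
open Finset

/-- The maximum of `x` over a finset `S` of indices (`0` if `S` is empty). -/
noncomputable def finsetMax {n : ℕ} (S : Finset (Fin n)) (x : Fin n → ℝ) : ℝ :=
  if h : S.Nonempty then S.sup' h x else 0

/-- The minimum of `x` over a finset `S` of indices (`0` if `S` is empty). -/
noncomputable def finsetMin {n : ℕ} (S : Finset (Fin n)) (x : Fin n → ℝ) : ℝ :=
  if h : S.Nonempty then S.inf' h x else 0

/-- index of the max, with junk value -/
noncomputable def maxIdx {n : ℕ} (hn0 : 0 < n) (S : Finset (Fin n)) : Fin n :=
  if h : S.Nonempty then S.max' h else ⟨0, hn0⟩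

noncomputable def minIdx {n : ℕ} (hn0 : 0 < n) (S : Finset (Fin n)) : Fin n :=
  if h : S.Nonempty then S.min' h else ⟨0, hn0⟩

lemma card_fiber_max {n β : ℕ} (hn0 : 0 < n) (i : Fin n) :
    ((Finset.powersetCard (β + 1) (Finset.univ : Finset (Fin n))).filter
      (fun S => maxIdx hn0 S = i)).card = Nat.choose (i : ℕ) β := by
  classical
  rw [← Fin.card_Iio i, ← Finset.card_powersetCard]
  apply Finset.card_bij' (fun S _ => S.erase i) (fun T _ => insert i T)
  · intro S hS
    obtain ⟨hS1, hS2⟩ := Finset.mem_filter.mp hS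
    rw [Finset.mem_powersetCard_univ] at hS1
    have hne : S.Nonempty := Finset.card_pos.mp (by omega)
    have hmax : S.max' hne = i := by rwa [maxIdx, dif_pos hne] at hS2
    exact Finset.insert_erase (hmax ▸ S.max'_mem hne)
  · intro T hT
    rw [Finset.mem_powersetCard] at hT
    have hiT : i ∉ T := fun h => lt_irrefl i (Finset.mem_Iio.mp (hT.1 h))
    exact Finset.erase_insert hiT

  · intro S hS
    obtain ⟨hS1, hS2⟩ := Finset.mem_filter.mp hS
    rw [Finset.mem_powersetCard_univ] at hS1
    have hne : S.Nonempty := Finset.card_pos.mp (by omega)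
    have hmax : S.max' hne = i := by rwa [maxIdx, dif_pos hne] at hS2
    have hiS : i ∈ S := hmax ▸ S.max'_mem hne
    rw [Finset.mem_powersetCard]
    constructor
    · intro j hj
      obtain ⟨hji, hjS⟩ := Finset.mem_erase.mp hj
      exact Finset.mem_Iio.mpr (lt_of_le_of_ne (hmax ▸ S.le_max' j hjS) hji)
    · rw [Finset.card_erase_of_mem hiS, hS1]; omega
  · intro T hT
    rw [Finset.mem_powersetCard] at hT
    obtain ⟨hT1, hT2⟩ := hT
    have hiT : i ∉ T := fun h => lt_irrefl i (Finset.mem_Iio.mp (hT1 h))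
    have hne : (insert i T).Nonempty := Finset.insert_nonempty _ _
    have hcard : (insert i T).card = β + 1 := by
      rw [Finset.card_insert_of_notMem hiT, hT2]
    rw [Finset.mem_filter, Finset.mem_powersetCard_univ]
    refine ⟨hcard, ?_⟩
    rw [maxIdx, dif_pos hne]
    apply le_antisymm
    · apply Finset.max'_le
      intro j hj
      rcases Finset.mem_insert.mp hj with h | h
      · exact le_of_eq h
      · exact le_of_lt (Finset.mem_Iio.mp (hT1 h))
    · exact Finset.le_max' _ i (Finset.mem_insert_self i T)
lemma card_fiber_min {n β : ℕ} (hn0 : 0 < n) (i : Fin n) :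
    ((Finset.powersetCard (β + 1) (Finset.univ : Finset (Fin n))).filter
      (fun S => minIdx hn0 S = i)).card = Nat.choose (n - 1 - (i : ℕ)) β := by
  classical
  rw [← Fin.card_Ioi i, ← Finset.card_powersetCard]
  apply Finset.card_bij' (fun S _ => S.erase i) (fun T _ => insert i T)
  · intro S hS
    obtain ⟨hS1, hS2⟩ := Finset.mem_filter.mp hS
    rw [Finset.mem_powersetCard_univ] at hS1
    have hne : S.Nonempty := Finset.card_pos.mp (by omega)
    have hmin : S.min' hne = i := by rwa [minIdx, dif_pos hne] at hS2
    exact Finset.insert_erase (hmin ▸ S.min'_mem hne)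
  · intro T hT
    rw [Finset.mem_powersetCard] at hT
    have hiT : i ∉ T := fun h => lt_irrefl i (Finset.mem_Ioi.mp (hT.1 h))
    exact Finset.erase_insert hiT

  · intro S hS
    obtain ⟨hS1, hS2⟩ := Finset.mem_filter.mp hS
    rw [Finset.mem_powersetCard_univ] at hS1
    have hne : S.Nonempty := Finset.card_pos.mp (by omega)
    have hmin : S.min' hne = i := by rwa [minIdx, dif_pos hne] at hS2
    have hiS : i ∈ S := hmin ▸ S.min'_mem hne
    rw [Finset.mem_powersetCard]
    constructor
    · intro j hj
      obtain ⟨hji, hjS⟩ := Finset.mem_erase.mp hj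
      exact Finset.mem_Ioi.mpr (lt_of_le_of_ne (hmin ▸ S.min'_le j hjS) (Ne.symm hji))
    · rw [Finset.card_erase_of_mem hiS, hS1]; omega
  · intro T hT
    rw [Finset.mem_powersetCard] at hT
    obtain ⟨hT1, hT2⟩ := hT
    have hiT : i ∉ T := fun h => lt_irrefl i (Finset.mem_Ioi.mp (hT1 h))
    have hne : (insert i T).Nonempty := Finset.insert_nonempty _ _
    have hcard : (insert i T).card = β + 1 := by
      rw [Finset.card_insert_of_notMem hiT, hT2]
    rw [Finset.mem_filter, Finset.mem_powersetCard_univ]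
    refine ⟨hcard, ?_⟩
    rw [minIdx, dif_pos hne]
    apply le_antisymm
    · exact Finset.min'_le _ i (Finset.mem_insert_self i T)
    · apply Finset.le_min'
      intro j hj
      rcases Finset.mem_insert.mp hj with h | h
      · exact le_of_eq h.symm
      · exact le_of_lt (Finset.mem_Ioi.mp (hT1 h))
lemma sum_fiber_repr {n β : ℕ} (hn0 : 0 < n) (g : Finset (Fin n) → Fin n) (f : Fin n → ℝ)
    (c : Fin n → ℕ)
    (hc : ∀ i, ((Finset.powersetCard (β + 1) (Finset.univ : Finset (Fin n))).filter
      (fun S => g S = i)).card = c i) :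
    ∑ S ∈ Finset.powersetCard (β + 1) (Finset.univ : Finset (Fin n)), f (g S)
      = ∑ i : Fin n, (c i : ℝ) * f i := by
  classical
  rw [← Finset.sum_fiberwise _ g (fun S => f (g S))]
  refine Finset.sum_congr rfl fun i _ => ?_
  have h1 : ∀ S ∈ (Finset.powersetCard (β + 1) (Finset.univ : Finset (Fin n))).filter
      (fun S => g S = i), f (g S) = f i := fun S hS => by rw [(Finset.mem_filter.mp hS).2]
  rw [Finset.sum_congr rfl h1, Finset.sum_const, hc, nsmul_eq_mul]

/-- For a nondecreasing sequence `0 < x₁ ≤ ⋯ ≤ x_n` of positive reals and `β + 1 ≤ n`,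
the U-statistic `C(n, β+1)⁻¹ (β+1)⁻¹ ∑_S (max_{i∈S} x_i − 1/min_{i∈S} x_i)` (the sum
running over all `(β+1)`-element subsets `S` of `{1, …, n}`) equals
`C(n, β+1)⁻¹ (β+1)⁻¹ ∑_{i=1}^n (C(i−1, β) x_i − C(n−i, β)/x_i)` (here indices are
0-based, so the coefficients are `C(i, β)` and `C(n − 1 − i, β)`). -/
theorem u_statistic_order_statistic_representation (n β : ℕ) (hn : β + 1 ≤ n)
    (x : Fin n → ℝ) (hpos : ∀ i, 0 < x i) (hx : Monotone x) :
    ((Nat.choose n (β + 1) : ℝ))⁻¹ * ((β + 1 : ℝ))⁻¹ *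
        ∑ S ∈ Finset.powersetCard (β + 1) (Finset.univ : Finset (Fin n)),
          (finsetMax S x - (finsetMin S x)⁻¹)
      = ((Nat.choose n (β + 1) : ℝ))⁻¹ * ((β + 1 : ℝ))⁻¹ *
        ∑ i : Fin n,
          (((Nat.choose (i : ℕ) β : ℕ) : ℝ) * x i
            - ((Nat.choose (n - 1 - (i : ℕ)) β : ℕ) : ℝ) / x i) := by
  classical
  have hn0 : 0 < n := lt_of_lt_of_le (Nat.succ_pos β) hn
  congr 1
  rw [Finset.sum_sub_distrib, Finset.sum_sub_distrib]
  congr 1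
  · have h1 : ∀ S ∈ Finset.powersetCard (β + 1) (Finset.univ : Finset (Fin n)),
        finsetMax S x = x (maxIdx hn0 S) := by
      intro S hS
      rw [Finset.mem_powersetCard_univ] at hS
      have hne : S.Nonempty := Finset.card_pos.mp (by omega)
      rw [finsetMax, dif_pos hne, maxIdx, dif_pos hne]
      apply le_antisymm
      · exact Finset.sup'_le hne x fun j hj => hx (S.le_max' j hj)
      · exact Finset.le_sup' x (S.max'_mem hne)
    rw [Finset.sum_congr rfl h1]
    exact sum_fiber_repr hn0 (maxIdx hn0) x _ (fun i => card_fiber_max hn0 i)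
  · have h1 : ∀ S ∈ Finset.powersetCard (β + 1) (Finset.univ : Finset (Fin n)),
        (finsetMin S x)⁻¹ = (x (minIdx hn0 S))⁻¹ := by
      intro S hS
      rw [Finset.mem_powersetCard_univ] at hS
      have hne : S.Nonempty := Finset.card_pos.mp (by omega)
      rw [finsetMin, dif_pos hne, minIdx, dif_pos hne]
      congr 1
      apply le_antisymm
      · exact Finset.inf'_le x (S.min'_mem hne)
      · exact Finset.le_inf' hne x fun j hj => hx (S.min'_le j hj)
    rw [Finset.sum_congr rfl h1,
      sum_fiber_repr hn0 (minIdx hn0) (fun i => (x i)⁻¹) _ (fun i => card_fiber_min hn0 i)]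
    exact Finset.sum_congr rfl fun i _ => (div_eq_mul_inv _ _).symm
end
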